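/- arXiv:2303.14578 — 3 statements merged into one kernel-verified Lean document; each statement's English description precedes it below -/
import Mathlib

section
/- Fix K > 0 and suppose J ≥ 1. Then the equation m = tanh(K m² + J m) has exactly one solution m₂ in the open interval (0,1). -/
/-!
For `m ∈ (0, 1)` the fixed-point equation is equivalent to `artanh m = K m² + J m`, i.e. to
`(artanh m - J m) / m² = K`. Expanding `artanh m = ∑ m^(2k+1) / (2k+1)`, the left-hand side is
`∑ m^(2k+1) / (2k+3) - (J - 1) / m`, a strictly increasing function of `m` when `J ≥ 1`. It is
below `K` for small `m` (compare with the geometric series `m / (1 - m²)`) and exceeds `K` at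
`m = tanh (|J| + |K| + 1)`, so the intermediate value theorem gives exactly one solution.
-/

open Real Set

namespace Real

theorem eq_tanh_iff_artanh_eq {m y : ℝ} (hm : m ∈ Ioo (-1) 1) : m = tanh y ↔ artanh m = y :=
  ⟨fun h => h ▸ artanh_tanh y, fun h => h ▸ (tanh_artanh hm).symm⟩

theorem continuousOn_artanh : ContinuousOn artanh (Ioo (-1) 1) := by
  intro x hx
  have hpos : 0 < (1 + x) / (1 - x) := div_pos (by linarith [hx.1]) (by linarith [hx.2])
  apply ContinuousAt.continuousWithinAt
  unfold artanh
  have hne : 1 - x ≠ 0 := by linarith [hx.2]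
  exact ((continuousAt_const.add continuousAt_id).div (continuousAt_const.sub continuousAt_id)
    hne).sqrt.log (sqrt_pos_of_pos hpos).ne'

theorem hasSum_artanh {x : ℝ} (hx : |x| < 1) :
    HasSum (fun k : ℕ => x ^ (2 * k + 1) / (2 * k + 1)) (artanh x) := by
  obtain ⟨hx₁, hx₂⟩ := abs_lt.mp hx
  have h := (hasSum_log_sub_log_of_abs_lt_one hx).div_const 2
  rw [artanh_eq_half_log ⟨hx₁.le, hx₂.le⟩, log_div (by linarith) (by linarith),
    one_div_mul_eq_div]
  exact h.congr_fun fun k => by field_simp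

/-- At `x = 0` both sides vanish, since `0 / 0 = 0`. -/
theorem hasSum_artanh_sub_div_sq {x : ℝ} (hx : |x| < 1) :
    HasSum (fun k : ℕ => x ^ (2 * k + 1) / (2 * k + 3)) ((artanh x - x) / x ^ 2) := by
  have h := ((hasSum_nat_add_iff' 1).mpr (hasSum_artanh hx)).div_const (x ^ 2)
  simp only [Finset.range_one, Finset.sum_singleton, CharP.cast_eq_zero, mul_zero, zero_add,
    pow_one, div_one] at h
  refine h.congr_fun fun k => ?_
  rcases eq_or_ne x 0 with rfl | hx0
  · simp
  · push_cast
    field_simp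
    ring

theorem strictMonoOn_artanh_sub_div_sq :
    StrictMonoOn (fun x => (artanh x - x) / x ^ 2) (Ioo (-1) 1) := by
  intro x hx y hy hxy
  refine hasSum_lt (i := 0) (fun k => ?_) ?_ (hasSum_artanh_sub_div_sq (abs_lt.mpr hx))
    (hasSum_artanh_sub_div_sq (abs_lt.mpr hy))
  · exact div_le_div_of_nonneg_right ((Odd.strictMono_pow ⟨k, rfl⟩).monotone hxy.le)
      (by positivity)
  · simpa using div_lt_div_of_pos_right hxy (by norm_num : (0 : ℝ) < 3)

theorem artanh_sub_div_sq_le {x : ℝ} (hx₀ : 0 ≤ x) (hx₁ : x < 1) :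
    (artanh x - x) / x ^ 2 ≤ x / (1 - x ^ 2) := by
  have hgeom : HasSum (fun k : ℕ => x ^ (2 * k + 1)) (x / (1 - x ^ 2)) :=
    ((hasSum_geometric_of_lt_one (sq_nonneg x) (by nlinarith)).mul_left x).congr_fun
      fun k => by ring
  refine hasSum_le (fun k => div_le_self (by positivity) (by linarith))
    (hasSum_artanh_sub_div_sq (abs_lt.mpr ⟨by linarith, hx₁⟩)) hgeom

end Real

noncomputable def consistencyRatio (J m : ℝ) : ℝ := (artanh m - J * m) / m ^ 2

theorem eq_tanh_iff_consistencyRatio_eq {K J m : ℝ} (hm : m ∈ Ioo 0 1) :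
    m = tanh (K * m ^ 2 + J * m) ↔ consistencyRatio J m = K := by
  have hm2 : m ^ 2 ≠ 0 := pow_ne_zero 2 hm.1.ne'
  rw [eq_tanh_iff_artanh_eq ⟨by linarith [hm.1], hm.2⟩, consistencyRatio, div_eq_iff hm2]
  constructor <;> intro h <;> linarith

theorem consistencyRatio_eq_of_ne_zero {J m : ℝ} (hm : m ≠ 0) :
    consistencyRatio J m = (artanh m - m) / m ^ 2 + -((J - 1) / m) := by
  rw [consistencyRatio]
  field_simp
  ring

theorem strictMonoOn_consistencyRatio {J : ℝ} (hJ : 1 ≤ J) :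
    StrictMonoOn (consistencyRatio J) (Ioo 0 1) := by
  have hmono : MonotoneOn (fun m : ℝ => -((J - 1) / m)) (Ioo 0 1) := fun x hx y _ hxy =>
    neg_le_neg (div_le_div_of_nonneg_left (by linarith) hx.1 hxy)
  refine ((strictMonoOn_artanh_sub_div_sq.mono ?_).add_monotone hmono).congr
    fun m hm => (consistencyRatio_eq_of_ne_zero hm.1.ne').symm
  exact Ioo_subset_Ioo_left (by norm_num)

theorem continuousOn_consistencyRatio (J : ℝ) : ContinuousOn (consistencyRatio J) (Ioo 0 1) := by
  refine ((continuousOn_artanh.mono ?_).sub (continuousOn_const.mul continuousOn_id)).div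
    (continuousOn_id.pow 2) fun m hm => pow_ne_zero 2 hm.1.ne'
  exact Ioo_subset_Ioo_left (by norm_num)

theorem exists_consistencyRatio_lt {J K : ℝ} (hJ : 1 ≤ J) (hK : 0 < K) :
    ∃ a ∈ Ioo 0 1, consistencyRatio J a < K := by
  set a := min (1 / 2) (K / 2)
  have ha₀ : 0 < a := lt_min (by norm_num) (by linarith)
  have ha₁ : a ≤ 1 / 2 := min_le_left _ _
  have haK : a ≤ K / 2 := min_le_right _ _
  refine ⟨a, ⟨ha₀, by linarith⟩, ?_⟩
  calc consistencyRatio J a ≤ (artanh a - a) / a ^ 2 := by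
        rw [consistencyRatio_eq_of_ne_zero ha₀.ne']
        linarith [div_nonneg (by linarith : 0 ≤ J - 1) ha₀.le]
    _ ≤ a / (1 - a ^ 2) := artanh_sub_div_sq_le ha₀.le (by linarith)
    _ < K := by
        have ha2 : a ^ 2 ≤ 1 / 4 := by nlinarith
        rw [div_lt_iff₀ (by linarith)]
        nlinarith [mul_le_mul_of_nonneg_left ha2 hK.le]

theorem exists_lt_consistencyRatio (J K : ℝ) : ∃ b ∈ Ioo 0 1, K < consistencyRatio J b := by
  set b := tanh (|J| + |K| + 1)
  have hb₀ : 0 < b := by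
    rw [show b = sinh _ / cosh _ from tanh_eq_sinh_div_cosh _]
    exact div_pos (sinh_pos_iff.mpr (by positivity)) (cosh_pos _)
  have hb₁ : b < 1 := tanh_lt_one _
  refine ⟨b, ⟨hb₀, hb₁⟩, ?_⟩
  have hnum : |K| + 1 ≤ artanh b - J * b := by
    rw [artanh_tanh]
    nlinarith [neg_abs_le J, le_abs_self J, abs_nonneg J]
  calc K < |K| + 1 := by linarith [le_abs_self K]
    _ ≤ (|K| + 1) / b ^ 2 := le_div_self (by positivity) (by positivity) (by nlinarith)
    _ ≤ consistencyRatio J b := div_le_div_of_nonneg_right hnum (by positivity)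

theorem unique_positive_solution_of_consistency (K J : ℝ) (hK : 0 < K) (hJ : 1 ≤ J) :
    ∃! m : ℝ, m ∈ Set.Ioo (0 : ℝ) 1 ∧ m = Real.tanh (K * m ^ 2 + J * m) := by
  obtain ⟨a, ha, hKa⟩ := exists_consistencyRatio_lt hJ hK
  obtain ⟨b, hb, hKb⟩ := exists_lt_consistencyRatio J K
  have hmono := strictMonoOn_consistencyRatio hJ
  have hab : a ≤ b := (hmono.lt_iff_lt ha hb).mp (hKa.trans hKb) |>.le
  have hsub : Icc a b ⊆ Ioo 0 1 := Icc_subset_Ioo ha.1 hb.2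
  obtain ⟨m, hm, hKm⟩ := intermediate_value_Icc hab
    ((continuousOn_consistencyRatio J).mono hsub) ⟨hKa.le, hKb.le⟩
  refine ⟨m, ⟨hsub hm, (eq_tanh_iff_consistencyRatio_eq (hsub hm)).mpr hKm⟩, ?_⟩
  rintro m' ⟨hm', hfix⟩
  exact hmono.injOn hm' (hsub hm) ((eq_tanh_iff_consistencyRatio_eq hm').mp hfix |>.trans hKm.symm)
end

section
/- Let φ : (-1,1) → ℝ be given by φ(m) = (K/3)m³ + (J/2)m² − I(m) with K > 0, J ≥ 1, and let m₂ ∈ (0,1) be its unique positive critical point, which is the unique global maximizer of φ. Then φ''(m₂) < 0 (the maximizer is nondegenerate). -/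
noncomputable def Ient (m : ℝ) : ℝ :=
  ((1 - m) / 2) * Real.log ((1 - m) / 2) + ((1 + m) / 2) * Real.log ((1 + m) / 2)

noncomputable def phi (K J m : ℝ) : ℝ := K / 3 * m ^ 3 + J / 2 * m ^ 2 - Ient m

/-!
On `(-1, 1)` we have `φ'' t = (J - 1) + t (2K - t / (1 - t²))`, and `t / (1 - t²)` is increasing
on `[0, 1)`. Hence if `φ'' m₂ ≥ 0`, then `φ'' > 0` on `(0, m₂)`: either `2K - m₂ / (1 - m₂²) ≥ 0`,
and the second summand is positive there, or it is negative, and the second summand only grows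
as `t` decreases from `m₂`. So `φ'` is strictly increasing on `[0, m₂]`, which is impossible
since `φ' 0 = 0 = φ' m₂`.
-/

open Real Set

noncomputable def phiDeriv (K J m : ℝ) : ℝ :=
  K * m ^ 2 + J * m - (log ((1 + m) / 2) - log ((1 - m) / 2)) / 2

noncomputable def phiDeriv2 (K J m : ℝ) : ℝ := 2 * K * m + J - 1 / (1 - m ^ 2)

section Derivatives

variable (K J : ℝ) {m : ℝ} (hm : m ∈ Ioo (-1 : ℝ) 1)
include hm

lemma hasDerivAt_Ient :
    HasDerivAt Ient ((log ((1 + m) / 2) - log ((1 - m) / 2)) / 2) m := by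
  have hp : (1 + m) / 2 ≠ 0 := by linarith [hm.1]
  have hq : (1 - m) / 2 ≠ 0 := by linarith [hm.2]
  have h₁ := (hasDerivAt_mul_log hq).comp m (((hasDerivAt_id' m).const_sub 1).div_const 2)
  have h₂ := (hasDerivAt_mul_log hp).comp m (((hasDerivAt_id' m).const_add 1).div_const 2)
  exact (h₁.add h₂).congr_deriv (by ring)

lemma hasDerivAt_phi : HasDerivAt (phi K J) (phiDeriv K J m) m := by
  have hpoly := ((hasDerivAt_pow 3 m).const_mul (K / 3)).add
    ((hasDerivAt_pow 2 m).const_mul (J / 2))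
  exact (hpoly.sub (hasDerivAt_Ient hm)).congr_deriv
    (by simp only [phiDeriv]; push_cast; ring)

lemma hasDerivAt_phiDeriv : HasDerivAt (phiDeriv K J) (phiDeriv2 K J m) m := by
  have hp : 1 + m ≠ 0 := by linarith [hm.1]
  have hq : 1 - m ≠ 0 := by linarith [hm.2]
  have hpq : 1 - m ^ 2 ≠ 0 := by nlinarith [hm.1, hm.2]
  have hpoly := ((hasDerivAt_pow 2 m).const_mul K).add ((hasDerivAt_id' m).const_mul J)
  have hlog := ((((hasDerivAt_id' m).const_add 1).div_const 2).log (by positivity)).sub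
    ((((hasDerivAt_id' m).const_sub 1).div_const 2).log (by positivity))
  refine (hpoly.sub (hlog.div_const 2)).congr_deriv ?_
  simp only [phiDeriv2]
  field_simp
  ring

lemma deriv_phi : deriv (phi K J) m = phiDeriv K J m :=
  (hasDerivAt_phi K J hm).deriv

lemma deriv_deriv_phi : deriv (deriv (phi K J)) m = phiDeriv2 K J m := by
  have h : deriv (phi K J) =ᶠ[nhds m] phiDeriv K J :=
    Filter.eventually_of_mem (isOpen_Ioo.mem_nhds hm) fun _ hx ↦ deriv_phi K J hx
  rw [h.deriv_eq, (hasDerivAt_phiDeriv K J hm).deriv]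

end Derivatives

lemma phiDeriv_zero (K J : ℝ) : phiDeriv K J 0 = 0 := by
  simp [phiDeriv]

lemma div_one_sub_sq_lt_div_one_sub_sq {s t : ℝ} (hs : 0 ≤ s) (hst : s < t) (ht : t < 1) :
    s / (1 - s ^ 2) < t / (1 - t ^ 2) :=
  div_lt_div₀ hst (by nlinarith) (by linarith) (by nlinarith)

lemma phiDeriv2_eq (K J : ℝ) {t : ℝ} (ht : 1 - t ^ 2 ≠ 0) :
    phiDeriv2 K J t = J - 1 + t * (2 * K - t / (1 - t ^ 2)) := by
  simp only [phiDeriv2]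
  field_simp
  ring

lemma phiDeriv2_pos_of_lt {K J s t : ℝ} (hJ : 1 ≤ J) (hs : 0 < s) (hst : s < t) (ht : t < 1)
    (h : 0 ≤ phiDeriv2 K J t) : 0 < phiDeriv2 K J s := by
  rw [phiDeriv2_eq K J (by nlinarith)] at h ⊢
  set c := 2 * K - t / (1 - t ^ 2)
  have hgrow : s * c < s * (2 * K - s / (1 - s ^ 2)) :=
    mul_lt_mul_of_pos_left (by linarith [div_one_sub_sq_lt_div_one_sub_sq hs.le hst ht]) hs
  rcases le_or_gt 0 c with hc | hc
  · linarith [mul_nonneg hs.le hc]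
  · linarith [mul_lt_mul_of_neg_right hst hc]

lemma strictMonoOn_phiDeriv {K J t : ℝ} (hJ : 1 ≤ J) (ht : t ∈ Ioo (0 : ℝ) 1)
    (h : 0 ≤ phiDeriv2 K J t) : StrictMonoOn (phiDeriv K J) (Icc 0 t) := by
  have hsub : ∀ s ∈ Icc 0 t, s ∈ Ioo (-1 : ℝ) 1 := fun s hs ↦
    ⟨by linarith [hs.1], by linarith [hs.2, ht.2]⟩
  refine strictMonoOn_of_deriv_pos (convex_Icc 0 t)
    (fun s hs ↦ (hasDerivAt_phiDeriv K J (hsub s hs)).continuousAt.continuousWithinAt) ?_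
  intro s hs
  rw [interior_Icc] at hs
  rw [(hasDerivAt_phiDeriv K J (hsub s (Ioo_subset_Icc_self hs))).deriv]
  exact phiDeriv2_pos_of_lt hJ hs.1 hs.2 ht.2 h

theorem nondegenerate_maximizer_general (K J m₂ : ℝ) (hJ : 1 ≤ J)
    (hm : m₂ ∈ Set.Ioo (0 : ℝ) 1)
    (hcrit : deriv (phi K J) m₂ = 0) :
    deriv (deriv (phi K J)) m₂ < 0 := by
  have hm' : m₂ ∈ Ioo (-1 : ℝ) 1 := ⟨by linarith [hm.1], hm.2⟩
  rw [deriv_deriv_phi K J hm']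
  by_contra! h
  have hlt := strictMonoOn_phiDeriv hJ hm h (left_mem_Icc.2 hm.1.le) (right_mem_Icc.2 hm.1.le) hm.1
  rw [phiDeriv_zero, ← deriv_phi K J hm', hcrit] at hlt
  exact hlt.false

theorem nondegenerate_maximizer (K J m₂ : ℝ) (hK : 0 < K) (hJ : 1 ≤ J)
    (hm : m₂ ∈ Set.Ioo (0 : ℝ) 1)
    (hcrit : deriv (phi K J) m₂ = 0)
    (huniq : ∀ m ∈ Set.Ioo (0 : ℝ) 1, deriv (phi K J) m = 0 → m = m₂)
    (hmax : IsMaxOn (phi K J) (Set.Icc (-1 : ℝ) 1) m₂) :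
    deriv (deriv (phi K J)) m₂ < 0 :=
  nondegenerate_maximizer_general K J m₂ hJ hm hcrit
end

section
/- Fix α > 0 and consider m*(K) defined for small K > 0 as the unique positive solution of m = tanh(K m² + (1+αK) m). Then m*(K)/√K → √(3α) as K → 0⁺. -/
/-!
Write `x = K m² + (1 + αK) m` for the argument of `tanh`. Then `x - tanh x = x - m = K m (m + α)`,
while `x - tanh x = x³/3 + O(x⁵)`. A crude form of this expansion forces `m → 0`, hence `x → 0`
and `x ~ m`; the sharp form then gives `K (m + α) ~ m²/3`, i.e. `m² / K → 3α`.
-/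

open Filter Topology

theorem le_of_hasDerivAt_le {f g f' g' : ℝ → ℝ} {a x : ℝ} (hf : ∀ y, HasDerivAt f (f' y) y)
    (hg : ∀ y, HasDerivAt g (g' y) y) (ha : f a ≤ g a) (hderiv : ∀ y, a ≤ y → f' y ≤ g' y)
    (hx : a ≤ x) : f x ≤ g x :=
  image_le_of_deriv_right_le_deriv_boundary
    (fun y _ => (hf y).continuousAt.continuousWithinAt) (fun y _ => (hf y).hasDerivWithinAt) ha
    (fun y _ => (hg y).continuousAt.continuousWithinAt) (fun y _ => (hg y).hasDerivWithinAt)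
    (fun y hy => hderiv y hy.1) ⟨hx, le_rfl⟩

namespace Real

theorem hasDerivAt_tanh (x : ℝ) : HasDerivAt tanh (1 - tanh x ^ 2) x := by
  have h : HasDerivAt (fun y => sinh y / cosh y) _ x :=
    (hasDerivAt_sinh x).div (hasDerivAt_cosh x) (cosh_pos x).ne'
  rw [show tanh = fun y => sinh y / cosh y from funext tanh_eq_sinh_div_cosh]
  refine h.congr_deriv ?_
  field_simp

theorem tanh_nonneg {x : ℝ} (hx : 0 ≤ x) : 0 ≤ tanh x := by
  rw [tanh_eq_sinh_div_cosh]
  exact div_nonneg (sinh_nonneg_iff.2 hx) (cosh_pos x).le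

theorem tanh_le_self {x : ℝ} (hx : 0 ≤ x) : tanh x ≤ x :=
  le_of_hasDerivAt_le hasDerivAt_tanh (fun y => hasDerivAt_id y) (by simp)
    (fun y _ => sub_le_self _ (sq_nonneg _)) hx

theorem self_sub_cube_div_three_le_tanh {x : ℝ} (hx : 0 ≤ x) : x - x ^ 3 / 3 ≤ tanh x := by
  refine le_of_hasDerivAt_le (f := fun y => y - y ^ 3 / 3) (f' := fun y => 1 - y ^ 2)
    (fun y => ?_) hasDerivAt_tanh (by simp) (fun y hy => ?_) hx
  · exact ((hasDerivAt_id' y).sub ((hasDerivAt_pow 3 y).div_const 3)).congr_deriv (by ring)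
  · have := pow_le_pow_left₀ (tanh_nonneg hy) (tanh_le_self hy) 2
    linarith

theorem tanh_le_self_sub_cube_div_three_add {x : ℝ} (hx : 0 ≤ x) :
    tanh x ≤ x - x ^ 3 / 3 + 2 * x ^ 5 / 15 := by
  refine le_of_hasDerivAt_le (g := fun y => y - y ^ 3 / 3 + 2 * y ^ 5 / 15)
    (g' := fun y => 1 - y ^ 2 + 2 * y ^ 4 / 3) hasDerivAt_tanh
    (fun y => ?_) (by simp) (fun y hy => ?_) hx
  · exact (((hasDerivAt_id' y).sub ((hasDerivAt_pow 3 y).div_const 3)).add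
      (((hasDerivAt_pow 5 y).const_mul 2).div_const 15)).congr_deriv (by ring)
  · suffices y ^ 2 - 2 * y ^ 4 / 3 ≤ tanh y ^ 2 by linarith
    rcases le_total (y ^ 2) 3 with hy3 | hy3
    · have hcube : 0 ≤ y - y ^ 3 / 3 := by nlinarith
      nlinarith [pow_le_pow_left₀ hcube (self_sub_cube_div_three_le_tanh hy) 2, sq_nonneg (y ^ 3)]
    · nlinarith [sq_nonneg (tanh y)]

theorem monotone_self_sub_tanh : Monotone fun x => x - tanh x := by
  have hderiv (x : ℝ) : HasDerivAt (fun x => x - tanh x) (tanh x ^ 2) x :=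
    ((hasDerivAt_id' x).sub (hasDerivAt_tanh x)).congr_deriv (by ring)
  exact monotone_of_deriv_nonneg (fun x => (hderiv x).differentiableAt)
    fun x => (hderiv x).deriv ▸ sq_nonneg _

theorem tendsto_self_sub_tanh_div_cube :
    Tendsto (fun x => (x - tanh x) / x ^ 3) (𝓝[>] 0) (𝓝 (1 / 3)) := by
  have hlower : Tendsto (fun x : ℝ => 1 / 3 - 2 * x ^ 2 / 15) (𝓝[>] 0) (𝓝 (1 / 3)) := by
    have : ContinuousAt (fun x : ℝ => 1 / 3 - 2 * x ^ 2 / 15) 0 := by fun_prop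
    simpa using this.tendsto.mono_left nhdsWithin_le_nhds
  refine tendsto_of_tendsto_of_tendsto_of_le_of_le' hlower tendsto_const_nhds ?_ ?_ <;>
    filter_upwards [self_mem_nhdsWithin] with x (hx : 0 < x)
  · rw [le_div_iff₀ (by positivity)]
    linarith [tanh_le_self_sub_cube_div_three_add hx.le]
  · rw [div_le_iff₀ (by positivity)]
    linarith [self_sub_cube_div_three_le_tanh hx.le]

end Real

/-- The argument `K m² + J m` of `tanh` in the mean-field equation, with `J = 1 + αK`. -/
def effectiveField (α K m : ℝ) : ℝ := K * m ^ 2 + (1 + α * K) * m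

section FixedPoint

variable {α K m : ℝ}

theorem effectiveField_sub_self : effectiveField α K m - m = K * m * (m + α) := by
  unfold effectiveField
  ring

theorem effectiveField_pos (hα : 0 ≤ α) (hK : 0 ≤ K) (hm : 0 < m) : 0 < effectiveField α K m := by
  unfold effectiveField
  positivity

theorem sq_le_of_eq_tanh_effectiveField (hα : 0 ≤ α) (hK : 0 ≤ K) (hm₀ : 0 < m) (hm₁ : m ≤ 1)
    (heq : m = Real.tanh (effectiveField α K m)) : m ^ 2 ≤ 5 * (1 + α) * K := by
  have hmx : m ≤ effectiveField α K m :=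
    sub_nonneg.1 (by rw [effectiveField_sub_self]; positivity)
  have hcube : m ^ 3 / 5 ≤ m - Real.tanh m := by
    nlinarith [Real.tanh_le_self_sub_cube_div_three_add hm₀.le, pow_le_one₀ hm₀.le hm₁ (n := 2),
      pow_pos hm₀ 3]
  have hmono : m - Real.tanh m ≤ effectiveField α K m - Real.tanh (effectiveField α K m) :=
    Real.monotone_self_sub_tanh hmx
  rw [← heq, effectiveField_sub_self] at hmono
  have : m * m ^ 2 ≤ m * (5 * (1 + α) * K) := by nlinarith [mul_nonneg hK hm₀.le]
  exact le_of_mul_le_mul_left this hm₀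

/-- Since `x = m (K m + 1 + αK)` and `x - tanh x = K m (m + α)` for `x = effectiveField α K m`. -/
theorem sq_div_eq_of_eq_tanh_effectiveField (hα : 0 ≤ α) (hK : 0 < K) (hm : 0 < m)
    (heq : m = Real.tanh (effectiveField α K m)) :
    m ^ 2 / K = (m + α) / ((effectiveField α K m - Real.tanh (effectiveField α K m)) /
      effectiveField α K m ^ 3 * (K * m + 1 + α * K) ^ 3) := by
  have hx := (effectiveField_pos hα hK.le hm).ne'
  have hgap : effectiveField α K m - m ≠ 0 := by
    rw [effectiveField_sub_self]
    positivity
  rw [← heq]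
  field_simp
  rw [effectiveField_sub_self]
  unfold effectiveField
  ring

end FixedPoint

theorem critical_exponent_alpha_pos (α : ℝ) (hα : 0 < α) (M : ℝ → ℝ)
    (hM : ∀ K : ℝ, 0 < K → M K ∈ Set.Ioo (0 : ℝ) 1 ∧
      M K = Real.tanh (K * (M K) ^ 2 + (1 + α * K) * M K)) :
    Filter.Tendsto (fun K => M K / Real.sqrt K) (nhdsWithin 0 (Set.Ioi 0))
      (nhds (Real.sqrt (3 * α))) := by
  have hKpos : ∀ᶠ K in 𝓝[>] (0 : ℝ), 0 < K := self_mem_nhdsWithin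
  have hK0 : Tendsto (fun K : ℝ => K) (𝓝[>] 0) (𝓝 0) :=
    tendsto_nhdsWithin_of_tendsto_nhds tendsto_id
  have hM0 : Tendsto M (𝓝[>] 0) (𝓝 0) := by
    have hbound : Tendsto (fun K => √(5 * (1 + α) * K)) (𝓝[>] 0) (𝓝 0) := by
      simpa using (hK0.const_mul (5 * (1 + α))).sqrt
    refine tendsto_of_tendsto_of_tendsto_of_le_of_le' tendsto_const_nhds hbound ?_ ?_ <;>
      filter_upwards [hKpos] with K hK
    · exact (hM K hK).1.1.le
    · obtain ⟨⟨hm₀, hm₁⟩, heq⟩ := hM K hK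
      exact Real.le_sqrt_of_sq_le (sq_le_of_eq_tanh_effectiveField hα.le hK.le hm₀ hm₁.le heq)
  have hx : Tendsto (fun K => effectiveField α K (M K)) (𝓝[>] 0) (𝓝[>] 0) := by
    refine tendsto_nhdsWithin_iff.2 ⟨?_, ?_⟩
    · simpa [effectiveField] using
        (hK0.mul (hM0.pow 2)).add ((tendsto_const_nhds.add (hK0.const_mul α)).mul hM0)
    · filter_upwards [hKpos] with K hK using effectiveField_pos hα.le hK.le (hM K hK).1.1
  have hsq : Tendsto (fun K => M K ^ 2 / K) (𝓝[>] 0) (𝓝 (3 * α)) := by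
    have h := (hM0.add_const α).div ((Real.tendsto_self_sub_tanh_div_cube.comp hx).mul
      ((((hK0.mul hM0).add_const 1).add (hK0.const_mul α)).pow 3)) (by norm_num)
    rw [show (0 + α) / (1 / 3 * (0 * 0 + 1 + α * 0) ^ 3) = 3 * α by ring] at h
    refine h.congr' ?_
    filter_upwards [hKpos] with K hK
    exact (sq_div_eq_of_eq_tanh_effectiveField hα.le hK (hM K hK).1.1 (hM K hK).2).symm
  refine hsq.sqrt.congr' ?_
  filter_upwards [hKpos] with K hK
  rw [Real.sqrt_div (sq_nonneg _), Real.sqrt_sq (hM K hK).1.1.le]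
end
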